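/- arXiv:2308.06040 — 3 statements merged into one kernel-verified Lean document; each statement's English description precedes it below -/
import Mathlib

section
/- Let X be a finite simple graph on n vertices and let m ≥ 2. Then the Laplacian spectrum (as a multiset) of the Kronecker product X × K_m equals the union of the spectrum of the matrix (m−1)·𝔏(X), each eigenvalue taken with its multiplicity, and the spectrum of the matrix A(X) + (m−1)·D(X), each eigenvalue taken with m−1 times its multiplicity. -/
open scoped Classical

noncomputable section

namespace ArxivPaper

/-- The Kronecker (tensor) product of two simple graphs. -/
def tensorProd {α β : Type*} (G : SimpleGraph α) (H : SimpleGraph β) : SimpleGraph (α × β) where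
  Adj p q := G.Adj p.1 q.1 ∧ H.Adj p.2 q.2
  symm := ⟨fun p q h => ⟨G.adj_symm h.1, H.adj_symm h.2⟩⟩
  loopless := ⟨fun p h => G.irrefl h.1⟩

/-- The multiset of eigenvalues of a real matrix (roots of its characteristic polynomial,
with algebraic multiplicity). -/
def spec {n : Type*} [Fintype n] [DecidableEq n] (M : Matrix n n ℝ) : Multiset ℝ :=
  M.charpoly.roots

/-- Eigenvalues sorted in nondecreasing order. -/
def sortedSpec {n : Type*} [Fintype n] [DecidableEq n] (M : Matrix n n ℝ) : List ℝ :=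
  (spec M).sort (· ≤ ·)

/-- The smallest eigenvalue of a real matrix. -/
def minEig {n : Type*} [Fintype n] [DecidableEq n] (M : Matrix n n ℝ) : ℝ :=
  (sortedSpec M).getD 0 0

/-- The Laplacian spectrum of a finite simple graph. -/
def lapSpec {V : Type*} [Fintype V] (G : SimpleGraph V) : Multiset ℝ :=
  spec (G.lapMatrix ℝ)

/-- Algebraic connectivity: the second smallest Laplacian eigenvalue. -/
def algConn {V : Type*} [Fintype V] (G : SimpleGraph V) : ℝ :=
  (sortedSpec (G.lapMatrix ℝ)).getD 1 0

/-- `Q_{m-1}(G) = A(G) + (m-1)·D(G)` as a real matrix. -/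
def qMatrix {V : Type*} [Fintype V] (G : SimpleGraph V) (m : ℕ) : Matrix V V ℝ :=
  G.adjMatrix ℝ + ((m : ℝ) - 1) • G.degMatrix ℝ

/-- `q_min^{m-1}(G)`: the smallest eigenvalue of `Q_{m-1}(G)`. -/
def qMin {V : Type*} [Fintype V] (G : SimpleGraph V) (m : ℕ) : ℝ :=
  minEig (qMatrix G m)

/-- `β_m(X) = L(X) × K_m`. -/
def betaM {V : Type*} (G : SimpleGraph V) (m : ℕ) : SimpleGraph (G.edgeSet × Fin m) :=
  tensorProd G.lineGraph (⊤ : SimpleGraph (Fin m))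

/-- The star graph `K_{1,n-1}` on `n` vertices, with center `0`. -/
def starGraph (n : ℕ) : SimpleGraph (Fin n) :=
  SimpleGraph.fromRel fun u _ => (u : ℕ) = 0

/-- The tree `T(k,s,t)`: a path on `k+1` vertices with `s` pendant vertices attached to the
first vertex and `t` pendant vertices attached to the last vertex. -/
def treeT (k s t : ℕ) : SimpleGraph (Fin (k+1) ⊕ (Fin s ⊕ Fin t)) :=
  SimpleGraph.fromRel fun u v => match u, v with
    | .inl i, .inl j => (i : ℕ) + 1 = (j : ℕ)
    | .inr (.inl _), .inl i => (i : ℕ) = 0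
    | .inr (.inr _), .inl i => (i : ℕ) = k
    | _, _ => False


open Polynomial Matrix Kronecker

/-! The Laplacian of `X × K_m` is `Q ⊗ I - A ⊗ J`, where `Q = A + (m - 1) D` and `J` is the
all-ones matrix. An explicit change of basis diagonalises `J` as `diag(m, 0, …, 0)`, so conjugating
by `I ⊗ P` makes the Laplacian block diagonal, with one block `Q - m A = (m - 1) 𝔏(X)` and `m - 1`
blocks `Q`. The characteristic polynomial, hence its multiset of roots, factors accordingly. -/

section Charpoly

variable {n o K : Type*} [Fintype n] [DecidableEq n] [Fintype o] [DecidableEq o]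

theorem charpoly_blockDiagonal [CommRing K] (f : o → Matrix n n K) :
    (blockDiagonal f).charpoly = ∏ k, (f k).charpoly := by
  have hcharmatrix : (blockDiagonal f).charmatrix = blockDiagonal fun k => (f k).charmatrix := by
    ext ⟨i, k⟩ ⟨j, l⟩
    by_cases hkl : k = l
    · subst hkl
      by_cases hij : i = j <;> simp [blockDiagonal_apply, hij]
    · simp [blockDiagonal_apply, hkl]
  rw [charpoly, hcharmatrix, det_blockDiagonal]
  rfl

theorem charpoly_eq_of_mul_eq_mul [CommRing K] {M N P Q : Matrix n n K} (hQP : Q * P = 1)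
    (h : M * P = P * N) : M.charpoly = N.charpoly := by
  have hN : N = Q * (M * P) := by rw [h, ← Matrix.mul_assoc, hQP, Matrix.one_mul]
  rw [hN, charpoly_mul_comm, Matrix.mul_assoc, mul_eq_one_comm.mp hQP, Matrix.mul_one]

end Charpoly

section OnesMatrix

variable {o K : Type*} [DecidableEq o] [Field K]

/-- Column `i₀` is the all-ones vector and column `j ≠ i₀` is `e_{i₀} - e_j`: eigenvectors of the
all-ones matrix for the eigenvalues `card o` and `0`. -/
def onesEigenbasis (i₀ : o) : Matrix o o K :=
  of fun i j => if j = i₀ then 1 else (if i = i₀ then 1 else 0) - if i = j then 1 else 0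

variable [Fintype o]

def onesEigenbasisInv (i₀ : o) : Matrix o o K :=
  (Fintype.card o : K)⁻¹ • of (fun _ _ => 1) - diagonal fun i => if i = i₀ then 0 else 1

theorem sum_onesEigenbasis_apply (i₀ j : o) :
    ∑ i, onesEigenbasis (K := K) i₀ i j = (Pi.single i₀ (Fintype.card o : K) : o → K) j := by
  by_cases hj : j = i₀
  · subst hj
    simp [onesEigenbasis]
  · simp [onesEigenbasis, hj, Finset.sum_sub_distrib]

theorem ones_mul_onesEigenbasis (i₀ : o) :
    of (fun _ _ => (1 : K)) * onesEigenbasis i₀ =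
      onesEigenbasis i₀ * diagonal (Pi.single i₀ (Fintype.card o : K)) := by
  ext i j
  rw [mul_diagonal, mul_apply]
  simp only [of_apply, one_mul, sum_onesEigenbasis_apply]
  by_cases hj : j = i₀ <;> simp [onesEigenbasis, hj]

theorem onesEigenbasisInv_mul [CharZero K] (i₀ : o) :
    onesEigenbasisInv (K := K) i₀ * onesEigenbasis i₀ = 1 := by
  have hcard : (Fintype.card o : K) ≠ 0 :=
    Nat.cast_ne_zero.mpr (Fintype.card_pos_iff.mpr ⟨i₀⟩).ne'
  rw [onesEigenbasisInv, Matrix.sub_mul, Matrix.smul_mul, ones_mul_onesEigenbasis]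
  ext i j
  by_cases hj : j = i₀
  · subst hj
    by_cases hi : i = j <;> simp [onesEigenbasis, hcard, hi, one_apply]
  · by_cases hi : i = j <;> simp [onesEigenbasis, hj, hi, one_apply]

variable {n : Type*} [Fintype n] [DecidableEq n]

theorem charpoly_kronecker_one_sub_kronecker_ones [CharZero K] (B₁ B₂ : Matrix n n K) (i₀ : o) :
    (B₁ ⊗ₖ (1 : Matrix o o K) - B₂ ⊗ₖ of (fun _ _ => 1)).charpoly =
      (B₁ - (Fintype.card o : K) • B₂).charpoly * B₁.charpoly ^ (Fintype.card o - 1) := by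
  set c : o → K := Pi.single i₀ (Fintype.card o : K)
  have hsim : (B₁ ⊗ₖ 1 - B₂ ⊗ₖ of (fun _ _ => 1)) * ((1 : Matrix n n K) ⊗ₖ onesEigenbasis i₀) =
      ((1 : Matrix n n K) ⊗ₖ onesEigenbasis i₀) * (B₁ ⊗ₖ 1 - B₂ ⊗ₖ diagonal c) := by
    simp only [Matrix.sub_mul, Matrix.mul_sub, ← mul_kronecker_mul, Matrix.one_mul,
      Matrix.mul_one, ones_mul_onesEigenbasis, c]
  have hinv : ((1 : Matrix n n K) ⊗ₖ onesEigenbasisInv i₀) * (1 ⊗ₖ onesEigenbasis i₀) = 1 := by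
    rw [← mul_kronecker_mul, Matrix.one_mul, onesEigenbasisInv_mul, one_kronecker_one]
  have hblock : B₁ ⊗ₖ 1 - B₂ ⊗ₖ diagonal c = blockDiagonal fun k => B₁ - c k • B₂ := by
    ext ⟨i, k⟩ ⟨j, l⟩
    by_cases hkl : k = l <;> simp [blockDiagonal_apply, one_apply, hkl, mul_comm]
  have hcompl (k : o) (hk : k ∈ ({i₀}ᶜ : Finset o)) : (B₁ - c k • B₂).charpoly = B₁.charpoly := by
    rw [Finset.mem_compl, Finset.mem_singleton] at hk
    simp [c, Pi.single_eq_of_ne hk]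
  rw [charpoly_eq_of_mul_eq_mul hinv hsim, hblock, charpoly_blockDiagonal,
    Fintype.prod_eq_mul_prod_compl i₀, Finset.prod_congr rfl hcompl, Finset.prod_const,
    Finset.card_compl, Finset.card_singleton]
  simp [c]

end OnesMatrix

section TensorProd

variable {α β : Type*} (G : SimpleGraph α) (H : SimpleGraph β)

@[simp]
theorem tensorProd_adj {p q : α × β} :
    (tensorProd G H).Adj p q ↔ G.Adj p.1 q.1 ∧ H.Adj p.2 q.2 :=
  Iff.rfl

instance [DecidableRel G.Adj] [DecidableRel H.Adj] : DecidableRel (tensorProd G H).Adj :=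
  fun _ _ => inferInstanceAs (Decidable (_ ∧ _))

variable [DecidableRel G.Adj] [DecidableRel H.Adj]

theorem adjMatrix_tensorProd (R : Type*) [MulZeroOneClass R] :
    (tensorProd G H).adjMatrix R = G.adjMatrix R ⊗ₖ H.adjMatrix R := by
  ext ⟨a, b⟩ ⟨a', b'⟩
  by_cases hG : G.Adj a a' <;> by_cases hH : H.Adj b b' <;>
    simp [SimpleGraph.adjMatrix_apply, hG, hH]

variable [Fintype α] [Fintype β]

theorem degree_tensorProd (a : α) (b : β) :
    (tensorProd G H).degree (a, b) = G.degree a * H.degree b := by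
  have : (tensorProd G H).neighborFinset (a, b) = G.neighborFinset a ×ˢ H.neighborFinset b := by
    ext ⟨a', b'⟩
    simp
  rw [← SimpleGraph.card_neighborFinset_eq_degree, this, Finset.card_product]
  rfl

variable [DecidableEq α] [DecidableEq β]

theorem degMatrix_tensorProd (R : Type*) [NonAssocSemiring R] :
    (tensorProd G H).degMatrix R = G.degMatrix R ⊗ₖ H.degMatrix R := by
  rw [SimpleGraph.degMatrix, SimpleGraph.degMatrix, SimpleGraph.degMatrix,
    diagonal_kronecker_diagonal]
  congr
  ext ⟨a, b⟩
  simp [degree_tensorProd]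

theorem lapMatrix_tensorProd (R : Type*) [Ring R] :
    (tensorProd G H).lapMatrix R =
      G.degMatrix R ⊗ₖ H.degMatrix R - G.adjMatrix R ⊗ₖ H.adjMatrix R := by
  rw [SimpleGraph.lapMatrix, degMatrix_tensorProd, adjMatrix_tensorProd]

end TensorProd

theorem lapMatrix_tensorProd_top {V W : Type*} [Fintype V] [Fintype W] [DecidableEq W]
    [Nonempty W] (G : SimpleGraph V) :
    (tensorProd G (⊤ : SimpleGraph W)).lapMatrix ℝ =
      qMatrix G (Fintype.card W) ⊗ₖ (1 : Matrix W W ℝ) - G.adjMatrix ℝ ⊗ₖ of (fun _ _ => 1) := by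
  rw [lapMatrix_tensorProd]
  ext ⟨v, w⟩ ⟨v', w'⟩
  by_cases hw : w = w'
  · simp [qMatrix, SimpleGraph.degMatrix, one_apply, hw, Nat.cast_sub Fintype.card_pos]
    ring
  · simp [SimpleGraph.degMatrix, one_apply, hw]

/-- `lapSpec` is defined with classical decidability instances; any others give the same value. -/
theorem lapSpec_eq_spec_lapMatrix {V : Type*} [Fintype V] [DecidableEq V] (G : SimpleGraph V)
    [DecidableRel G.Adj] : lapSpec G = spec (G.lapMatrix ℝ) := by
  unfold lapSpec
  congr!

theorem qMatrix_sub_smul_adjMatrix {V : Type*} [Fintype V] (G : SimpleGraph V) (m : ℕ) :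
    qMatrix G m - (m : ℝ) • G.adjMatrix ℝ = ((m : ℝ) - 1) • G.lapMatrix ℝ := by
  rw [qMatrix, SimpleGraph.lapMatrix, smul_sub, sub_smul (m : ℝ) 1 (G.adjMatrix ℝ), one_smul]
  abel

/-- The Laplacian spectrum of `X × K_m` is the union of the spectrum of
`(m-1)·𝔏(X)` and `m-1` copies of the spectrum of `A(X) + (m-1)·D(X)`. -/
theorem laplacian_spectrum_tensor_complete {V : Type*} [Fintype V]
    (G : SimpleGraph V) (m : ℕ) (hm : 2 ≤ m) :
    lapSpec (tensorProd G (⊤ : SimpleGraph (Fin m))) =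
      spec (((m : ℝ) - 1) • G.lapMatrix ℝ) + (m - 1) • spec (qMatrix G m) := by
  have : NeZero m := ⟨by omega⟩
  have hchar : ((tensorProd G (⊤ : SimpleGraph (Fin m))).lapMatrix ℝ).charpoly =
      (((m : ℝ) - 1) • G.lapMatrix ℝ).charpoly * (qMatrix G m).charpoly ^ (m - 1) := by
    rw [lapMatrix_tensorProd_top, charpoly_kronecker_one_sub_kronecker_ones _ _ 0,
      Fintype.card_fin, qMatrix_sub_smul_adjMatrix]
  rw [lapSpec_eq_spec_lapMatrix, spec, spec, spec, hchar, roots_mul, roots_pow]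
  exact mul_ne_zero (charpoly_monic _).ne_zero (pow_ne_zero _ (charpoly_monic _).ne_zero)

end ArxivPaper
end
end

section
/- Let m ≥ 2, t ≥ 2, and let X = T(1,1,t). Then the smallest eigenvalue of Q_{m−1}(L(X)) = A(L(X)) + (m−1)·D(L(X)) is at most ((m−1)(t+2) − √(t²(m−1)² + 4))/2, and hence is strictly less than m−1. -/
/-! In `L(T(1,1,t))` the middle edge `e₀` of the path and the pendant edge `e₁` at its first
vertex are adjacent, of degrees `t + 1` and `1`, so the principal submatrix of `Q_{m-1}` on
`{e₀, e₁}` is `[[(m-1)(t+1), 1], [1, m-1]]`, whose smaller eigenvalue `μ` is the stated bound.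
Extending a `μ`-eigenvector of it by zero gives a vector with Rayleigh quotient `μ` for the whole
symmetric matrix, so `q_min ≤ μ`; and `μ < m - 1` because `√(t²(m-1)² + 4) > t(m-1)`. -/

open scoped Classical

noncomputable section

namespace SimpleGraph

variable {V : Type*} (G : SimpleGraph V)

lemma map_neighborFinset_lineGraph [DecidableEq V] [G.LocallyFinite] {u w : V}
    (h : G.Adj u w) [Fintype (G.lineGraph.neighborSet ⟨s(u, w), h⟩)] :
    (G.lineGraph.neighborFinset ⟨s(u, w), h⟩).map (Function.Embedding.subtype _) =
      (G.incidenceFinset u ∪ G.incidenceFinset w).erase s(u, w) := by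
  ext f
  simp only [Finset.mem_map, mem_neighborFinset, lineGraph_adj_iff_exists,
    Function.Embedding.coe_subtype, Finset.mem_erase, Finset.mem_union, mem_incidenceFinset]
  constructor
  · rintro ⟨⟨f, hf⟩, ⟨hne, v, hv, hvf⟩, rfl⟩
    refine ⟨fun h' => hne (Subtype.ext h'.symm), ?_⟩
    rcases Sym2.mem_iff.1 hv with rfl | rfl
    · exact .inl ⟨hf, hvf⟩
    · exact .inr ⟨hf, hvf⟩
  · rintro ⟨hne, hu | hw⟩
    · exact ⟨⟨f, hu.1⟩, ⟨fun h' => hne (congrArg Subtype.val h').symm, u, by simp, hu.2⟩, rfl⟩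
    · exact ⟨⟨f, hw.1⟩, ⟨fun h' => hne (congrArg Subtype.val h').symm, w, by simp, hw.2⟩, rfl⟩

lemma degree_lineGraph_add_two [G.LocallyFinite] {u w : V}
    (h : G.Adj u w) [Fintype (G.lineGraph.neighborSet ⟨s(u, w), h⟩)] :
    G.lineGraph.degree ⟨s(u, w), h⟩ + 2 = G.degree u + G.degree w := by
  have hinter : G.incidenceFinset u ∩ G.incidenceFinset w = {s(u, w)} := by
    rw [← Finset.coe_inj, Finset.coe_inter, coe_incidenceFinset, coe_incidenceFinset,
      incidenceSet_inter_incidenceSet_of_adj _ h, Finset.coe_singleton]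
  have hmem : s(u, w) ∈ G.incidenceFinset u ∪ G.incidenceFinset w :=
    Finset.mem_union_left _ ((mem_incidenceFinset _ _ _).2 ⟨h, Sym2.mem_mk_left u w⟩)
  rw [← card_neighborFinset_eq_degree, ← Finset.card_map (Function.Embedding.subtype _),
    map_neighborFinset_lineGraph, Finset.card_erase_of_mem hmem,
    ← card_incidenceFinset_eq_degree, ← card_incidenceFinset_eq_degree,
    ← Finset.card_union_add_card_inter, hinter, Finset.card_singleton]
  have := Finset.card_pos.2 ⟨_, hmem⟩
  omega

end SimpleGraph

namespace ArxivPaper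

open Matrix

section minEig

variable {n : Type*} [Fintype n] [DecidableEq n]

lemma minEig_le_of_mem_spec {M : Matrix n n ℝ} {r : ℝ} (hr : r ∈ spec M) : minEig M ≤ r := by
  have hsorted : (sortedSpec M).Pairwise (· ≤ ·) := Multiset.pairwise_sort _ _
  have hmem : r ∈ sortedSpec M := (Multiset.mem_sort _).2 hr
  unfold minEig
  rcases hl : sortedSpec M with _ | ⟨a, l⟩
  · simp [hl] at hmem
  · rw [hl, List.pairwise_cons] at hsorted
    rw [hl, List.mem_cons] at hmem
    rcases hmem with rfl | hmem
    · exact le_rfl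
    · exact hsorted.1 r hmem

lemma minEig_le_eigenvalues {A : Matrix n n ℝ} (hA : A.IsHermitian) (i : n) :
    minEig A ≤ hA.eigenvalues i :=
  minEig_le_of_mem_spec <| by
    rw [spec, hA.roots_charpoly_eq_eigenvalues]
    exact Multiset.mem_map_of_mem _ (Finset.mem_univ i)

lemma posSemidef_sub_minEig_smul_one {A : Matrix n n ℝ} (hA : A.IsHermitian) :
    (A - minEig A • 1).PosSemidef := by
  set U : Matrix n n ℝ := (hA.eigenvectorUnitary : Matrix n n ℝ)
  have hUU : U * star U = 1 := Unitary.mul_star_self_of_mem hA.eigenvectorUnitary.2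
  have hdiag : (diagonal fun i => hA.eigenvalues i - minEig A).PosSemidef :=
    posSemidef_diagonal_iff.2 fun i => sub_nonneg.2 (minEig_le_eigenvalues hA i)
  have hA' : A - minEig A • 1 = U * diagonal (fun i => hA.eigenvalues i - minEig A) * Uᴴ := by
    have hD : diagonal (fun i => hA.eigenvalues i - minEig A) =
        diagonal (RCLike.ofReal ∘ hA.eigenvalues) - minEig A • 1 := by
      ext i j
      by_cases h : i = j <;> simp [h, one_apply]
    rw [hD, mul_sub, sub_mul, Matrix.mul_smul, mul_one, Matrix.smul_mul, ← star_eq_conjTranspose,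
      hUU]
    nth_rw 1 [hA.spectral_theorem]
    rfl
  rw [hA']
  exact hdiag.mul_mul_conjTranspose_same U

lemma minEig_mul_dotProduct_self_le {A : Matrix n n ℝ} (hA : A.IsHermitian) (v : n → ℝ) :
    minEig A * (v ⬝ᵥ v) ≤ v ⬝ᵥ (A *ᵥ v) := by
  have h := (posSemidef_sub_minEig_smul_one hA).dotProduct_mulVec_nonneg v
  rw [star_trivial, sub_mulVec, smul_mulVec, one_mulVec, dotProduct_sub, dotProduct_smul,
    smul_eq_mul] at h
  linarith

lemma dotProduct_mulVec_single_add_single {R : Type*} [CommRing R] (M : Matrix n n R)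
    (u w : n) (a b : R) :
    (Pi.single u a + Pi.single w b) ⬝ᵥ (M *ᵥ (Pi.single u a + Pi.single w b)) =
      a * a * M u u + a * b * (M u w + M w u) + b * b * M w w := by
  simp only [mulVec_add, mulVec_single, add_dotProduct, dotProduct_add, single_dotProduct,
    Pi.smul_apply, col_apply, op_smul_eq_mul]
  ring

lemma minEig_le_of_sub_mul_sub_eq_sq {A : Matrix n n ℝ} (hA : A.IsHermitian) {u w : n}
    (huw : u ≠ w) (hAuw : A u w ≠ 0) {μ : ℝ} (hμ : (μ - A u u) * (μ - A w w) = A u w ^ 2) :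
    minEig A ≤ μ := by
  -- `(A u w, μ - A u u)` is a `μ`-eigenvector of the principal submatrix of `A` on `{u, w}`.
  set v : n → ℝ := Pi.single u (A u w) + Pi.single w (μ - A u u)
  have hsymm : A w u = A u w := by simpa using hA.apply u w
  have hvv : v ⬝ᵥ v = A u w ^ 2 + (μ - A u u) ^ 2 := by
    have h1 := dotProduct_mulVec_single_add_single (1 : Matrix n n ℝ) u w (A u w) (μ - A u u)
    rw [one_mulVec] at h1
    rw [h1, one_apply_eq, one_apply_eq, one_apply_ne huw, one_apply_ne huw.symm]
    ring
  have hvAv : v ⬝ᵥ (A *ᵥ v) = μ * (v ⬝ᵥ v) := by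
    rw [dotProduct_mulVec_single_add_single, hsymm, hvv]
    linear_combination -(μ - A u u) * hμ
  have hpos : 0 < v ⬝ᵥ v := by
    rw [hvv]; positivity
  have := minEig_mul_dotProduct_self_le hA v
  rw [hvAv] at this
  exact le_of_mul_le_mul_right this hpos

end minEig

section qMatrix

open SimpleGraph

variable {V : Type*} [Fintype V] (G : SimpleGraph V) (m : ℕ)

lemma qMatrix_isHermitian : (qMatrix G m).IsHermitian :=
  isHermitian_iff_isSymm.2 <| G.isSymm_adjMatrix.add ((G.isSymm_degMatrix (R := ℝ)).smul _)

lemma qMatrix_apply_self (v : V) : qMatrix G m v v = ((m : ℝ) - 1) * G.degree v := by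
  simp [qMatrix, degMatrix]

lemma qMatrix_apply_of_adj {u w : V} (h : G.Adj u w) : qMatrix G m u w = 1 := by
  simp [qMatrix, degMatrix, h, h.ne]

lemma qMin_le_of_adj {u w : V} (h : G.Adj u w) {μ : ℝ}
    (hμ : (μ - ((m : ℝ) - 1) * G.degree u) * (μ - ((m : ℝ) - 1) * G.degree w) = 1) :
    qMin G m ≤ μ :=
  minEig_le_of_sub_mul_sub_eq_sq (qMatrix_isHermitian G m) h.ne
    (by simp [qMatrix_apply_of_adj G m h])
    (by rw [qMatrix_apply_self, qMatrix_apply_self, qMatrix_apply_of_adj G m h, one_pow, hμ])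

end qMatrix

section treeT

open SimpleGraph

variable (s t : ℕ)

lemma treeT_one_adj_inl_zero_inl_one : (treeT 1 s t).Adj (.inl 0) (.inl 1) := by
  simp [treeT]

lemma treeT_adj_inr_inl_inl_zero (k : ℕ) (i : Fin s) :
    (treeT k s t).Adj (.inr (.inl i)) (.inl 0) := by
  simp [treeT]

lemma degree_treeT_one_inl_zero : (treeT 1 s t).degree (.inl 0) = s + 1 := by
  rw [← card_neighborFinset_eq_degree, neighborFinset_eq_filter, Finset.card_filter,
    Fintype.sum_sum_type, Fintype.sum_sum_type, Fin.sum_univ_two]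
  simp [treeT, -Finset.sum_boole, add_comm]

lemma degree_treeT_one_inl_one : (treeT 1 s t).degree (.inl 1) = t + 1 := by
  rw [← card_neighborFinset_eq_degree, neighborFinset_eq_filter, Finset.card_filter,
    Fintype.sum_sum_type, Fintype.sum_sum_type, Fin.sum_univ_two]
  simp [treeT, -Finset.sum_boole, add_comm]

lemma degree_treeT_inr_inl (k : ℕ) (i : Fin s) : (treeT k s t).degree (.inr (.inl i)) = 1 := by
  rw [← card_neighborFinset_eq_degree, neighborFinset_eq_filter, Finset.card_filter,
    Fintype.sum_sum_type, Fintype.sum_sum_type]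
  simp [treeT, -Finset.sum_boole]

lemma degree_lineGraph_treeT_one_central :
    (treeT 1 s t).lineGraph.degree ⟨s(.inl 0, .inl 1), treeT_one_adj_inl_zero_inl_one s t⟩ =
      s + t := by
  have h := degree_lineGraph_add_two _ (treeT_one_adj_inl_zero_inl_one s t)
  rw [degree_treeT_one_inl_zero, degree_treeT_one_inl_one] at h
  omega

lemma degree_lineGraph_treeT_one_pendant (i : Fin s) :
    (treeT 1 s t).lineGraph.degree ⟨s(.inr (.inl i), .inl 0), treeT_adj_inr_inl_inl_zero s t 1 i⟩ =
      s := by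
  have h := degree_lineGraph_add_two _ (treeT_adj_inr_inl_inl_zero s t 1 i)
  rw [degree_treeT_inr_inl, degree_treeT_one_inl_zero] at h
  omega

lemma lineGraph_treeT_one_adj_central_pendant (i : Fin s) :
    (treeT 1 s t).lineGraph.Adj ⟨s(.inl 0, .inl 1), treeT_one_adj_inl_zero_inl_one s t⟩
      ⟨s(.inr (.inl i), .inl 0), treeT_adj_inr_inl_inl_zero s t 1 i⟩ :=
  lineGraph_adj_iff_exists.2 ⟨by simp [Subtype.ext_iff], .inl 0, by simp, by simp⟩

end treeT

theorem qMin_lineGraph_T11t_general (m t : ℕ) :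
    qMin (treeT 1 1 t).lineGraph m ≤
      (((m:ℝ)-1)*((t:ℝ)+2) - Real.sqrt ((t:ℝ)^2*((m:ℝ)-1)^2 + 4))/2 ∧
    qMin (treeT 1 1 t).lineGraph m < (m:ℝ) - 1 := by
  set c : ℝ := (m : ℝ) - 1
  set r := Real.sqrt ((t : ℝ) ^ 2 * c ^ 2 + 4)
  have hr : r ^ 2 = (t : ℝ) ^ 2 * c ^ 2 + 4 := Real.sq_sqrt (by positivity)
  have hle : qMin (treeT 1 1 t).lineGraph m ≤ (c * (t + 2) - r) / 2 := by
    refine qMin_le_of_adj _ m (lineGraph_treeT_one_adj_central_pendant 1 t 0) ?_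
    rw [degree_lineGraph_treeT_one_central, degree_lineGraph_treeT_one_pendant]
    push_cast
    linear_combination (1 / 4 : ℝ) * hr
  have hlt : (c * (t + 2) - r) / 2 < c := by
    have : t * c < r := Real.lt_sqrt_of_sq_lt (by linarith)
    linarith
  exact ⟨hle, hle.trans_lt hlt⟩

/-- for `X = T(1,1,t)` with `t ≥ 2`, the smallest eigenvalue of
`Q_{m-1}(L(X))` is at most `((m-1)(t+2) - √(t²(m-1)² + 4))/2 < m-1`. -/
theorem qMin_lineGraph_T11t (m t : ℕ) (hm : 2 ≤ m) (ht : 2 ≤ t) :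
    qMin (treeT 1 1 t).lineGraph m ≤
      (((m:ℝ)-1)*((t:ℝ)+2) - Real.sqrt ((t:ℝ)^2*((m:ℝ)-1)^2 + 4))/2 ∧
    qMin (treeT 1 1 t).lineGraph m < (m:ℝ) - 1 :=
  qMin_lineGraph_T11t_general m t

end ArxivPaper
end
end

section
/- Let η ≥ 2 and μ ≥ 3. The Laplacian eigenvalues of the windmill graph W(η,μ) are exactly 0 with multiplicity 1, 1 with multiplicity η−1, μ with multiplicity η(μ−2), and ημ−η+1 with multiplicity 1. -/
/-! With the hub listed first, the Laplacian of `W(η,μ)` is the block matrix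
`[[η(μ-1), -1ᵀ], [-1, I_η ⊗ (μ I - J)]]`, where `J` is the all-ones matrix of size `μ-1`.
The lower-right block has all row sums `1`, so scaling the hub column of the characteristic
matrix by `X - 1` and subtracting all other columns from it makes it block triangular:
`(X - 1) χ_L = X (X - η(μ-1) - 1) χ_{μI-J}^η`. Since `J` has rank one,
`χ_{μI-J} = (X - μ)^(μ-2) (X - 1)`, and the spectrum can be read off. -/

open scoped Classical

noncomputable section

namespace ArxivPaper

/-- The windmill graph `W(η,μ)`: `η` copies of `K_μ` glued at a common vertex. -/
def windmill (η μ : ℕ) : SimpleGraph (Unit ⊕ Fin η × Fin (μ-1)) :=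
  SimpleGraph.fromRel fun u v => match u, v with
    | .inl _, .inr _ => True
    | .inr p, .inr q => p.1 = q.1
    | _, _ => False

open Matrix Polynomial
open scoped Kronecker

section CharacteristicPolynomial

variable {R n : Type*} [CommRing R] [Fintype n]

theorem one_kronecker_mulVec_const {m : Type*} [Fintype m] [DecidableEq m] (K : Matrix n n R)
    (d : R) (hK : K *ᵥ (fun _ => 1) = fun _ => d) :
    ((1 : Matrix m m R) ⊗ₖ K) *ᵥ (fun _ => 1) = fun _ => d := by
  funext ⟨i, t⟩
  simpa [mulVec, dotProduct, Fintype.sum_prod_type, one_apply] using congrFun hK t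

variable [DecidableEq n]

theorem charmatrix_mulVec_const (M : Matrix n n R) (d : R)
    (hM : M *ᵥ (fun _ => 1) = fun _ => d) :
    charmatrix M *ᵥ (fun _ => 1) = fun _ => X - C d := by
  funext i
  have hrow : ∑ j, M i j = d := by simpa [mulVec, dotProduct] using congrFun hM i
  simp [charmatrix_apply, mulVec, dotProduct, diagonal_apply, Finset.sum_sub_distrib, ← map_sum,
    hrow]

theorem scalar_sub_ones_mulVec_const (c : R) :
    (scalar n c - of fun _ _ => 1) *ᵥ (fun _ => 1) = fun _ => c - Fintype.card n := by
  funext i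
  simp [mulVec, dotProduct, diagonal_apply]

theorem charpoly_scalar_sub_ones [Nonempty n] (c : R) :
    (scalar n c - of fun _ _ => 1).charpoly =
      (X - C c) ^ (Fintype.card n - 1) * (X - C (c - Fintype.card n)) := by
  have hvec : scalar n c - of (fun _ _ => (1 : R)) =
      vecMulVec (fun _ => -1) (fun _ => 1) - scalar n (-c) := by
    ext i j
    by_cases h : i = j <;> simp [h, vecMulVec_apply]; ring
  obtain ⟨k, hk⟩ : ∃ k, Fintype.card n = k + 1 :=
    ⟨_, (Nat.sub_add_cancel Fintype.card_pos).symm⟩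
  rw [hvec, charpoly_sub_scalar, charpoly_vecMulVec, hk]
  simp [pow_succ, sub_comp, smul_eq_C_mul, dotProduct, hk]
  ring

theorem charpoly_one_kronecker {m : Type*} [Fintype m] [DecidableEq m] (K : Matrix n n R) :
    ((1 : Matrix m m R) ⊗ₖ K).charpoly = K.charpoly ^ Fintype.card m := by
  have : charmatrix ((1 : Matrix m m R) ⊗ₖ K) = (1 : Matrix m m R[X]) ⊗ₖ charmatrix K := by
    ext ⟨i, k⟩ ⟨j, l⟩
    by_cases hij : i = j <;> by_cases hkl : k = l <;> simp [one_apply, hij, hkl]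
  rw [charpoly, this, det_kronecker, det_one, one_pow, one_mul, charpoly]

theorem det_fromBlocks_mul_of_mulVec_const (a d : R) (b : n → R) (D : Matrix n n R)
    (hD : D *ᵥ (fun _ => 1) = fun _ => d) :
    (fromBlocks (of fun _ _ => a) (of fun _ j => b j) (of fun _ _ => 1) D :
        Matrix (Unit ⊕ n) (Unit ⊕ n) R).det * d = (a * d - ∑ j, b j) * D.det := by
  let Q : Matrix (Unit ⊕ n) (Unit ⊕ n) R := fromBlocks (of fun _ _ => d) 0 (of fun _ _ => -1) 1
  have hQ : Q.det = d := by simp [Q]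
  have hrow : ∀ i, ∑ j, D i j = d := fun i => by
    simpa [mulVec, dotProduct] using congrFun hD i
  have hMQ : fromBlocks (of fun _ _ => a) (of fun _ j => b j) (of fun _ _ => 1) D * Q =
      fromBlocks (of fun _ _ => a * d - ∑ j, b j) (of fun _ j => b j) 0 D := by
    simp only [Q, fromBlocks_multiply]
    congr 1
    · ext; simp [mul_apply, sub_eq_add_neg]
    · ext; simp
    · ext i _; simp [mul_apply, hrow]
    · simp
  have := det_mul (fromBlocks (of fun _ _ => a) (of fun _ j => b j) (of fun _ _ => 1) D) Q
  rw [hMQ, hQ, det_fromBlocks_zero₂₁] at this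
  simpa using this.symm

end CharacteristicPolynomial

namespace windmill

variable {η μ : ℕ}

@[simp] theorem adj_inl_inr (u : Unit) (p : Fin η × Fin (μ - 1)) :
    (windmill η μ).Adj (.inl u) (.inr p) := by
  simp [windmill]

@[simp] theorem adj_inr_inl (p : Fin η × Fin (μ - 1)) (u : Unit) :
    (windmill η μ).Adj (.inr p) (.inl u) := by
  simp [windmill]

@[simp] theorem adj_inr_inr (p q : Fin η × Fin (μ - 1)) :
    (windmill η μ).Adj (.inr p) (.inr q) ↔ p.1 = q.1 ∧ p.2 ≠ q.2 := by
  simp [windmill, Prod.ext_iff]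
  tauto

theorem degree_inl (u : Unit) : (windmill η μ).degree (.inl u) = η * (μ - 1) := by
  have : (windmill η μ).neighborFinset (.inl u) = Finset.univ.map .inr := by
    ext (v | q) <;> simp
  simp [← SimpleGraph.card_neighborFinset_eq_degree, this]

theorem degree_inr (p : Fin η × Fin (μ - 1)) : (windmill η μ).degree (.inr p) = μ - 1 := by
  have hN : (windmill η μ).neighborFinset (.inr p) =
      Finset.univ.disjSum ({p.1} ×ˢ Finset.univ.erase p.2) := by
    ext (v | q)
    · simp
    · simp [Prod.ext_iff, eq_comm]; tauto
  have hμ := p.2.pos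
  simp only [← SimpleGraph.card_neighborFinset_eq_degree, hN]
  simp
  omega

theorem lapMatrix_eq :
    (windmill η μ).lapMatrix ℝ =
      fromBlocks (of fun _ _ => (η * (μ - 1 : ℕ) : ℝ)) (of fun _ _ => -1) (of fun _ _ => -1)
        ((1 : Matrix (Fin η) (Fin η) ℝ) ⊗ₖ
          (scalar (Fin (μ - 1)) (μ : ℝ) - of fun _ _ => 1)) := by
  ext (u | ⟨i, t⟩) (v | ⟨j, s⟩)
  · simp [SimpleGraph.lapMatrix, SimpleGraph.degMatrix, degree_inl]
  · simp [SimpleGraph.lapMatrix, SimpleGraph.degMatrix]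
  · simp [SimpleGraph.lapMatrix, SimpleGraph.degMatrix]
  · have hμ : 1 ≤ μ := by have := t.pos; omega
    by_cases hij : i = j <;> by_cases hts : t = s <;>
      simp [SimpleGraph.lapMatrix, SimpleGraph.degMatrix, degree_inr, one_apply,
        Matrix.natCast_apply, Nat.cast_sub hμ, hij, hts]

theorem charpoly_lapMatrix_mul_X_sub_one (hμ : 2 ≤ μ) :
    ((windmill η μ).lapMatrix ℝ).charpoly * (X - C 1) =
      ((X - C (η * (μ - 1 : ℕ) : ℝ)) * (X - C 1) - ((η * (μ - 1) : ℕ) : ℝ[X])) *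
        ((X - C (μ : ℝ)) ^ (μ - 2) * (X - C 1)) ^ η := by
  set K := scalar (Fin (μ - 1)) (μ : ℝ) - of fun _ _ => 1
  have hK1 : K *ᵥ (fun _ => 1) = fun _ => 1 := by
    rw [scalar_sub_ones_mulVec_const]; simp [Nat.cast_sub (by omega : 1 ≤ μ)]
  have hK : K.charpoly = (X - C (μ : ℝ)) ^ (μ - 2) * (X - C 1) := by
    have : Nonempty (Fin (μ - 1)) := ⟨⟨0, by omega⟩⟩
    rw [charpoly_scalar_sub_ones, Fintype.card_fin, Nat.sub_sub,
      Nat.cast_sub (by omega : 1 ≤ μ)]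
    simp
  have hL : charmatrix ((windmill η μ).lapMatrix ℝ) =
      fromBlocks (of fun _ _ => X - C (η * (μ - 1 : ℕ) : ℝ)) (of fun _ _ => 1)
        (of fun _ _ => 1) (charmatrix ((1 : Matrix (Fin η) (Fin η) ℝ) ⊗ₖ K)) := by
    rw [lapMatrix_eq, charmatrix_fromBlocks]
    congr 1
    · ext; simp
    · ext; simp
  rw [charpoly, hL, det_fromBlocks_mul_of_mulVec_const _ _ _ _
    (charmatrix_mulVec_const _ _ (one_kronecker_mulVec_const K 1 hK1)), ← charpoly,
    charpoly_one_kronecker, hK]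
  simp

theorem charpoly_lapMatrix (hη : 1 ≤ η) (hμ : 2 ≤ μ) :
    ((windmill η μ).lapMatrix ℝ).charpoly =
      X * (X - C ((η : ℝ) * μ - η + 1)) * (X - C 1) ^ (η - 1) *
        (X - C (μ : ℝ)) ^ (η * (μ - 2)) := by
  refine mul_right_cancel₀ (X_sub_C_ne_zero (1 : ℝ))
    ((charpoly_lapMatrix_mul_X_sub_one hμ).trans ?_)
  obtain ⟨k, rfl⟩ : ∃ k, η = k + 1 := ⟨η - 1, by omega⟩
  obtain ⟨l, rfl⟩ : ∃ l, μ = l + 2 := ⟨μ - 2, by omega⟩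
  simp only [Nat.add_sub_cancel, show l + 2 - 1 = l + 1 by omega, map_add, map_sub, map_mul,
    map_natCast, map_one, mul_pow, ← pow_mul]
  push_cast
  ring

end windmill

/-- the Laplacian spectrum of the windmill graph `W(η,μ)`. -/
theorem lapSpec_windmill (η μ : ℕ) (hη : 2 ≤ η) (hμ : 3 ≤ μ) :
    lapSpec (windmill η μ) =
      (0 : ℝ) ::ₘ ((η:ℝ)*(μ:ℝ) - (η:ℝ) + 1) ::ₘ
        (Multiset.replicate (η-1) (1:ℝ) + Multiset.replicate (η*(μ-2)) (μ:ℝ)) := by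
  unfold lapSpec spec
  rw [← roots_multiset_prod_X_sub_C (_ ::ₘ _)]
  congr 1
  convert windmill.charpoly_lapMatrix (η := η) (μ := μ) (by omega) (by omega) using 1
  · -- `lapSpec` builds the Laplacian with the classical `DecidableEq` instance on the vertices
    congr!
  · simp only [Multiset.map_cons, Multiset.map_add, Multiset.map_replicate, Multiset.prod_cons,
      Multiset.prod_add, Multiset.prod_replicate, map_zero, sub_zero]
    ring

end ArxivPaper
end
end
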